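/- (Attainment of the global minimum.) Under the cluster-centric DGP, the choice h = id restricted to S^{d-1}, w_i = v_{𝒞(i)} for all i ∈ I, and β = κ satisfies β⟨w_i − w_k, h(z)⟩ = κ⟨v_{𝒞(i)} − v_{𝒞(k)}, z⟩ for all i, k ∈ I and all z ∈ S^{d-1}, and therefore globally minimizes the latent DIET objective L_z(h, W, β) = E_{(z,I)}[ −ln( exp(β⟨w_I, h(z)⟩) / Σ_{j∈I} exp(β⟨w_j, h(z)⟩) ) ] over all continuous h: S^{d-1} → R^d, all heads W, and all β > 0. -/

import Mathlib

open MeasureTheory Metric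
open scoped RealInnerProductSpace BigOperators

/-- The uniform (surface) measure on the unit sphere of `ℝ^d`, obtained from the
Lebesgue measure on `EuclideanSpace ℝ (Fin d)`. -/
noncomputable def sphereUniform (d : ℕ) :
    Measure (Metric.sphere (0 : EuclideanSpace ℝ (Fin d)) 1) :=
  (volume : Measure (EuclideanSpace ℝ (Fin d))).toSphere

/-- A finite system of vectors is an *affine generator system* of `ℝ^d` if every vector
is a linear combination of the system with coefficients summing to `1`. -/
def IsAffineGenerator {d : ℕ} {ι : Type} [Fintype ι]
    (v : ι → EuclideanSpace ℝ (Fin d)) : Prop :=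
  ∀ x : EuclideanSpace ℝ (Fin d), ∃ α : ι → ℝ,
    (∑ c, α c = 1) ∧ x = ∑ c, α c • v c

/-- The latent DIET objective
`L_z(h, W, β) = E_{(z,I)}[ −ln( exp(β⟨w_I, h z⟩) / Σ_j exp(β⟨w_j, h z⟩) ) ]`,
where the instance label is uniform on `Idx` and, conditionally on the label `i`, the
latent `z` is distributed on the unit sphere according to the von Mises–Fisher density
proportional to `exp (κ ⟪v (Cl i), z⟫)` with respect to the uniform (surface) measure. -/
noncomputable def dietLossZ (d : ℕ) {Cset Idx : Type} [Fintype Idx]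
    (v : Cset → EuclideanSpace ℝ (Fin d)) (κ : ℝ) (Cl : Idx → Cset)
    (h : Metric.sphere (0 : EuclideanSpace ℝ (Fin d)) 1 → EuclideanSpace ℝ (Fin d))
    (w : Idx → EuclideanSpace ℝ (Fin d)) (β : ℝ) : ℝ :=
  (Fintype.card Idx : ℝ)⁻¹ * ∑ i : Idx,
    ((∫ z : Metric.sphere (0 : EuclideanSpace ℝ (Fin d)) 1,
        Real.exp (κ * ⟪v (Cl i), (z : EuclideanSpace ℝ (Fin d))⟫)
        ∂(sphereUniform d))⁻¹ *
      ∫ z : Metric.sphere (0 : EuclideanSpace ℝ (Fin d)) 1,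
        Real.exp (κ * ⟪v (Cl i), (z : EuclideanSpace ℝ (Fin d))⟫) *
          (- Real.log (Real.exp (β * ⟪w i, h z⟫) /
            ∑ j : Idx, Real.exp (β * ⟪w j, h z⟫)))
        ∂(sphereUniform d))

/-!
Every von Mises–Fisher normaliser `∫ exp (κ ⟪v c, z⟫)` is the same, because a reflection of the
sphere preserves its surface measure and exchanges any two unit vectors. With a common normaliser
the loss is, up to a positive factor, the integral over `z` of the cross-entropy
`∑ᵢ pᵢ(z) · (-log qᵢ(z))` between the weights `pᵢ(z) = exp (κ ⟪v (𝒞 i), z⟫)` and the model's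
softmax `q(z)`. By Gibbs' inequality this is smallest, for every `z`, when `q(z)` is `p(z)`
normalised, which is exactly the softmax of `h = id`, `wᵢ = v (𝒞 i)`, `β = κ`.
-/

open scoped Pointwise

namespace Real

variable {ι : Type*} [Fintype ι]

lemma mul_log_div_le_sub {a b : ℝ} (ha : 0 < a) (hb : 0 < b) : a * log (b / a) ≤ b - a := by
  have := log_le_sub_one_of_pos (div_pos hb ha)
  calc a * log (b / a) ≤ a * (b / a - 1) := mul_le_mul_of_nonneg_left this ha.le
    _ = b - a := by field_simp

theorem sum_mul_neg_log_div_sum_le (a q : ι → ℝ) (ha : ∀ i, 0 < a i) (hq : ∀ i, 0 < q i)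
    (hq_sum : ∑ i, q i ≤ 1) :
    ∑ i, a i * -log (a i / ∑ j, a j) ≤ ∑ i, a i * -log (q i) := by
  set T := ∑ j, a j
  have hT : ∀ i, 0 < T := fun i => Finset.sum_pos (fun j _ => ha j) ⟨i, Finset.mem_univ i⟩
  have hterm : ∀ i, a i * -log (a i / T) = a i * -log (q i) + a i * log (q i * T / a i) :=
    fun i => by
      rw [log_div (ha i).ne' (hT i).ne', log_div (mul_pos (hq i) (hT i)).ne' (ha i).ne',
        log_mul (hq i).ne' (hT i).ne']
      ring
  calc ∑ i, a i * -log (a i / T)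
      ≤ ∑ i, (a i * -log (q i) + (q i * T - a i)) := by
        refine Finset.sum_le_sum fun i _ => ?_
        rw [hterm]
        gcongr
        exact mul_log_div_le_sub (ha i) (mul_pos (hq i) (hT i))
    _ = ∑ i, a i * -log (q i) + ((∑ i, q i) * T - T) := by
        rw [Finset.sum_add_distrib, Finset.sum_sub_distrib, ← Finset.sum_mul]
    _ ≤ ∑ i, a i * -log (q i) := by
        have : 0 ≤ T := Finset.sum_nonneg fun i _ => (ha i).le
        nlinarith

lemma sum_exp_pos (s : ι → ℝ) (i : ι) : 0 < ∑ j, exp (s j) :=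
  Finset.sum_pos (fun j _ => exp_pos (s j)) ⟨i, Finset.mem_univ i⟩

lemma exp_div_sum_exp_pos (s : ι → ℝ) (i : ι) : 0 < exp (s i) / ∑ j, exp (s j) :=
  div_pos (exp_pos _) (sum_exp_pos s i)

theorem sum_exp_mul_neg_log_softmax_le (s t : ι → ℝ) :
    ∑ i, exp (s i) * -log (exp (s i) / ∑ j, exp (s j)) ≤
      ∑ i, exp (s i) * -log (exp (t i) / ∑ j, exp (t j)) := by
  refine sum_mul_neg_log_div_sum_le _ _ (fun i => exp_pos _) (exp_div_sum_exp_pos t) ?_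
  rw [← Finset.sum_div]
  exact div_self_le_one _

lemma continuous_neg_log_softmax {X : Type*} [TopologicalSpace X] {s : ι → X → ℝ}
    (hs : ∀ j, Continuous (s j)) (i : ι) :
    Continuous fun x => -log (exp (s i x) / ∑ j, exp (s j x)) :=
  have hsum : Continuous fun x => ∑ j, exp (s j x) :=
    continuous_finsetSum _ fun j _ => continuous_exp.comp (hs j)
  ((continuous_exp.comp (hs i)).div hsum fun x => (sum_exp_pos (s · x) i).ne').log
    (fun x => (exp_div_sum_exp_pos (s · x) i).ne') |>.neg

end Real

namespace LinearIsometryEquiv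

variable {E : Type*} [NormedAddCommGroup E] [NormedSpace ℝ E]

noncomputable def sphereHomeo (e : E ≃ₗᵢ[ℝ] E) : sphere (0 : E) 1 ≃ₜ sphere (0 : E) 1 :=
  e.toHomeomorph.sets (by simp [e.preimage_sphere])

@[simp]
lemma coe_sphereHomeo (e : E ≃ₗᵢ[ℝ] E) (z : sphere (0 : E) 1) :
    (e.sphereHomeo z : E) = e z :=
  rfl

lemma image_Ioo_smul (e : E ≃ₗᵢ[ℝ] E) (s : Set E) :
    e '' (Set.Ioo (0 : ℝ) 1 • s) = Set.Ioo (0 : ℝ) 1 • e '' s := by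
  simp only [← Set.image2_smul, Set.image_image2, Set.image2_image_right, map_smul]

lemma measurePreserving_sphereHomeo [MeasurableSpace E] [BorelSpace E] {μ : Measure E}
    (e : E ≃ₗᵢ[ℝ] E) (he : MeasurePreserving e μ μ) :
    MeasurePreserving e.sphereHomeo μ.toSphere μ.toSphere := by
  refine ⟨e.sphereHomeo.continuous.measurable, Measure.ext fun s hs => ?_⟩
  have hpre := e.sphereHomeo.continuous.measurable hs
  have hval : ((↑) '' (e.sphereHomeo ⁻¹' s) : Set E) = e.symm '' ((↑) '' s) := by
    rw [← e.sphereHomeo.image_symm, Set.image_image, Set.image_image]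
    rfl
  rw [Measure.map_apply e.sphereHomeo.continuous.measurable hs, Measure.toSphere_apply' _ hpre,
    Measure.toSphere_apply' _ hs, hval, ← image_Ioo_smul, e.symm.image_eq_preimage_symm,
    e.symm_symm]
  exact congrArg _ (he.measure_preimage_emb e.toHomeomorph.measurableEmbedding _)

end LinearIsometryEquiv

section SphereIntegral

variable {E : Type*} [NormedAddCommGroup E] [InnerProductSpace ℝ E] [FiniteDimensional ℝ E]
  [MeasurableSpace E] [BorelSpace E]

lemma integral_comp_inner_sphere_eq_of_norm_eq (f : ℝ → ℝ) {u u' : E}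
    (h : ‖u‖ = ‖u'‖) :
    ∫ z : sphere (0 : E) 1, f ⟪u, z⟫ ∂(volume : Measure E).toSphere =
      ∫ z : sphere (0 : E) 1, f ⟪u', z⟫ ∂(volume : Measure E).toSphere := by
  set e : E ≃ₗᵢ[ℝ] E := Submodule.reflection (ℝ ∙ (u - u'))ᗮ
  have heu : e u = u' := Submodule.reflection_sub h
  calc ∫ z : sphere (0 : E) 1, f ⟪u, z⟫ ∂(volume : Measure E).toSphere
      = ∫ z : sphere (0 : E) 1, f ⟪u', e.sphereHomeo z⟫ ∂(volume : Measure E).toSphere := by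
        simp only [LinearIsometryEquiv.coe_sphereHomeo, ← heu, e.inner_map_map]
    _ = ∫ z : sphere (0 : E) 1, f ⟪u', z⟫ ∂(volume : Measure E).toSphere :=
        (e.measurePreserving_sphereHomeo e.measurePreserving).integral_comp
          e.sphereHomeo.measurableEmbedding (fun z : sphere (0 : E) 1 => f ⟪u', z⟫)

end SphereIntegral

lemma integrable_mul_neg_log_softmax {X : Type*} [TopologicalSpace X] [CompactSpace X]
    [MeasurableSpace X] [OpensMeasurableSpace X] {μ : Measure X} [IsFiniteMeasure μ]
    {ι : Type*} [Fintype ι] {f : X → ℝ} (hf : Continuous f) (s : ι → X → ℝ)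
    (hs : ∀ j, Continuous (s j)) (i : ι) :
    Integrable (fun x => f x * -Real.log (Real.exp (s i x) / ∑ j, Real.exp (s j x))) μ :=
  (hf.mul (Real.continuous_neg_log_softmax hs i)).integrable_of_hasCompactSupport
    (.of_compactSpace _)

instance (d : ℕ) : IsFiniteMeasure (sphereUniform d) :=
  inferInstanceAs (IsFiniteMeasure (volume : Measure (EuclideanSpace ℝ (Fin d))).toSphere)

section DietLoss

variable {d : ℕ} {Cset Idx : Type} [Fintype Idx]
  {h : sphere (0 : EuclideanSpace ℝ (Fin d)) 1 → EuclideanSpace ℝ (Fin d)}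
  (v : Cset → EuclideanSpace ℝ (Fin d)) (κ : ℝ) (Cl : Idx → Cset)

lemma integrable_exp_inner_mul_neg_log_softmax (u : EuclideanSpace ℝ (Fin d)) (hh : Continuous h)
    (w : Idx → EuclideanSpace ℝ (Fin d)) (β : ℝ) (i : Idx) :
    Integrable (fun z : sphere (0 : EuclideanSpace ℝ (Fin d)) 1 =>
      Real.exp (κ * ⟪u, ↑z⟫) *
        -Real.log (Real.exp (β * ⟪w i, h z⟫) / ∑ j, Real.exp (β * ⟪w j, h z⟫)))
      (sphereUniform d) :=
  integrable_mul_neg_log_softmax (by fun_prop) (fun j z => β * ⟪w j, h z⟫)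
    (fun j => by fun_prop) i

lemma dietLossZ_eq_of_integral_exp_inner_eq {Z : ℝ}
    (hZ : ∀ i, ∫ z, Real.exp (κ * ⟪v (Cl i), ↑z⟫) ∂sphereUniform d = Z)
    (hh : Continuous h) (w : Idx → EuclideanSpace ℝ (Fin d)) (β : ℝ) :
    dietLossZ d v κ Cl h w β = (Fintype.card Idx : ℝ)⁻¹ * (Z⁻¹ *
      ∫ z, ∑ i, Real.exp (κ * ⟪v (Cl i), ↑z⟫) *
        -Real.log (Real.exp (β * ⟪w i, h z⟫) / ∑ j, Real.exp (β * ⟪w j, h z⟫))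
        ∂sphereUniform d) := by
  rw [dietLossZ, integral_finsetSum]
  · simp only [hZ, Finset.mul_sum]
  · exact fun i _ => integrable_exp_inner_mul_neg_log_softmax κ (v (Cl i)) hh w β i

lemma dietLossZ_coe_le_of_integral_exp_inner_eq
    (hZ : ∀ i j, ∫ z, Real.exp (κ * ⟪v (Cl i), ↑z⟫) ∂sphereUniform d =
      ∫ z, Real.exp (κ * ⟪v (Cl j), ↑z⟫) ∂sphereUniform d)
    (hh : Continuous h) (w : Idx → EuclideanSpace ℝ (Fin d)) (β : ℝ) :
    dietLossZ d v κ Cl (fun z => ↑z) (fun i => v (Cl i)) κ ≤ dietLossZ d v κ Cl h w β := by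
  rcases isEmpty_or_nonempty Idx with _ | ⟨⟨i₀⟩⟩
  · simp [dietLossZ]
  rw [dietLossZ_eq_of_integral_exp_inner_eq v κ Cl (fun i => hZ i i₀) continuous_subtype_val,
    dietLossZ_eq_of_integral_exp_inner_eq v κ Cl (fun i => hZ i i₀) hh]
  refine mul_le_mul_of_nonneg_left (mul_le_mul_of_nonneg_left (integral_mono ?_ ?_ fun z => ?_)
    (inv_nonneg.mpr (integral_nonneg fun z => (Real.exp_pos _).le))) (by positivity)
  · exact integrable_finsetSum _ fun i _ => integrable_exp_inner_mul_neg_log_softmax κ (v (Cl i))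
      continuous_subtype_val (fun i => v (Cl i)) κ i
  · exact integrable_finsetSum _ fun i _ =>
      integrable_exp_inner_mul_neg_log_softmax κ (v (Cl i)) hh w β i
  · exact Real.sum_exp_mul_neg_log_softmax_le (fun i => κ * ⟪v (Cl i), ↑z⟫)
      (fun i => β * ⟪w i, h z⟫)

end DietLoss

theorem dietLossZ_attained_general
    {d : ℕ} {Cset Idx : Type} [Fintype Idx]
    (v : Cset → EuclideanSpace ℝ (Fin d))
    (hv_norm : ∀ c, ‖v c‖ = 1)
    (Cl : Idx → Cset)
    (κ : ℝ) :
    (∀ i k : Idx, ∀ z : Metric.sphere (0 : EuclideanSpace ℝ (Fin d)) 1,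
      κ * ⟪v (Cl i) - v (Cl k), ((z : EuclideanSpace ℝ (Fin d)))⟫ =
        κ * ⟪v (Cl i) - v (Cl k), (z : EuclideanSpace ℝ (Fin d))⟫) ∧
    (∀ (h' : Metric.sphere (0 : EuclideanSpace ℝ (Fin d)) 1 → EuclideanSpace ℝ (Fin d))
      (w' : Idx → EuclideanSpace ℝ (Fin d)) (β' : ℝ), Continuous h' → 0 < β' →
      dietLossZ d v κ Cl (fun z => (z : EuclideanSpace ℝ (Fin d))) (fun i => v (Cl i)) κ ≤
        dietLossZ d v κ Cl h' w' β') := by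
  refine ⟨fun _ _ _ => rfl, fun h' w' β' hh' _ => ?_⟩
  refine dietLossZ_coe_le_of_integral_exp_inner_eq v κ Cl (fun i j => ?_) hh' w' β'
  exact integral_comp_inner_sphere_eq_of_norm_eq (fun t => Real.exp (κ * t))
    (by rw [hv_norm, hv_norm])

/-- **Attainment of the global minimum.** The choice `h = id` (the inclusion of the
sphere), `w i = v (𝒞 i)` and `β = κ` satisfies the optimality equation
`β ⟨w i − w k, h z⟩ = κ ⟨v_{𝒞(i)} − v_{𝒞(k)}, z⟩` and globally minimizes the latent DIET
objective over all continuous `h`, all heads `W` and all `β > 0`. -/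
theorem dietLossZ_attained
    {d : ℕ} {Cset Idx : Type} [Fintype Cset] [Fintype Idx]
    (v : Cset → EuclideanSpace ℝ (Fin d))
    (hv_norm : ∀ c, ‖v c‖ = 1)
    (hv_gen : IsAffineGenerator v)
    (Cl : Idx → Cset) (hCl : Function.Surjective Cl)
    (κ : ℝ) (hκ : 0 < κ) :
    (∀ i k : Idx, ∀ z : Metric.sphere (0 : EuclideanSpace ℝ (Fin d)) 1,
      κ * ⟪v (Cl i) - v (Cl k), ((z : EuclideanSpace ℝ (Fin d)))⟫ =
        κ * ⟪v (Cl i) - v (Cl k), (z : EuclideanSpace ℝ (Fin d))⟫) ∧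
    (∀ (h' : Metric.sphere (0 : EuclideanSpace ℝ (Fin d)) 1 → EuclideanSpace ℝ (Fin d))
      (w' : Idx → EuclideanSpace ℝ (Fin d)) (β' : ℝ), Continuous h' → 0 < β' →
      dietLossZ d v κ Cl (fun z => (z : EuclideanSpace ℝ (Fin d))) (fun i => v (Cl i)) κ ≤
        dietLossZ d v κ Cl h' w' β') :=
  dietLossZ_attained_general v hv_norm Cl κ
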